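/- arXiv:1206.2406 — 3 statements merged into one kernel-verified Lean document; each statement's English description precedes it below -/
import Mathlib

section
/- The map f defined on [0,1] by f(x) = 1 - sqrt(1 - 2x) for x < 1/2 and f(x) = sqrt(2x - 1) for x ≥ 1/2 preserves Lebesgue measure on [0,1]. -/
/-!
On `[0, 1/2)` and `[1/2, 1]` the map has the inverse branches `y ↦ y - y²/2` and
`y ↦ (1 + y²)/2`, so for `t ∈ [0, 1)` the set `{x ∈ [0, 1] | f x ≤ t}` is
`[0, t - t²/2] ∪ [1/2, (1 + t²)/2]`, of total length `t`. Distribution functions on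
`[0, 1]` determine the measure.
-/

open MeasureTheory

noncomputable def bakerFactor : ℝ → ℝ := fun x =>
  if x < 1/2 then 1 - Real.sqrt (1 - 2*x) else Real.sqrt (2*x - 1)

open Set

theorem measurePreserving_volume_restrict_Icc {f : ℝ → ℝ} {a b : ℝ} (hf : Measurable f)
    (hmaps : MapsTo f (Icc a b) (Icc a b))
    (hcdf : ∀ t ∈ Ico a b, volume (f ⁻¹' Iic t ∩ Icc a b) = ENNReal.ofReal (t - a)) :
    MeasurePreserving f (volume.restrict (Icc a b)) (volume.restrict (Icc a b)) := by
  refine ⟨hf, Measure.ext_of_Iic _ _ fun t => ?_⟩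
  rw [Measure.map_apply hf measurableSet_Iic, Measure.restrict_apply (hf measurableSet_Iic),
    Measure.restrict_apply measurableSet_Iic]
  rcases lt_or_ge t a with hta | hat
  · have hempty : Iic t ∩ Icc a b = ∅ :=
      eq_empty_of_forall_notMem fun x hx => (hx.1.trans_lt hta).not_ge hx.2.1
    have hpre_empty : f ⁻¹' Iic t ∩ Icc a b = ∅ :=
      eq_empty_of_forall_notMem fun x hx => ((hmaps hx.2).1.trans hx.1).not_gt hta
    rw [hempty, hpre_empty]
  rcases lt_or_ge t b with htb | hbt
  · have hIcc : Iic t ∩ Icc a b = Icc a t := by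
      ext x
      simp only [mem_inter_iff, mem_Iic, mem_Icc]
      constructor
      · rintro ⟨hxt, hax, -⟩
        exact ⟨hax, hxt⟩
      · rintro ⟨hax, hxt⟩
        exact ⟨hxt, hax, hxt.trans htb.le⟩
    rw [hcdf t ⟨hat, htb⟩, hIcc, Real.volume_Icc]
  · have hsub : Icc a b ⊆ Iic t := fun x hx => hx.2.trans hbt
    have hpre_sub : Icc a b ⊆ f ⁻¹' Iic t := fun x hx => (hmaps hx).2.trans hbt
    rw [inter_eq_right.2 hsub, inter_eq_right.2 hpre_sub]

lemma bakerFactor_measurable : Measurable bakerFactor :=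
  Measurable.ite (measurableSet_lt measurable_id measurable_const) (by fun_prop) (by fun_prop)

lemma bakerFactor_mapsTo : MapsTo bakerFactor (Icc 0 1) (Icc 0 1) := by
  rintro x ⟨hx0, hx1⟩
  unfold bakerFactor
  split_ifs
  · exact ⟨by linarith [Real.sqrt_le_one.2 (by linarith : 1 - 2*x ≤ 1)],
      by linarith [Real.sqrt_nonneg (1 - 2*x)]⟩
  · exact ⟨Real.sqrt_nonneg _, Real.sqrt_le_one.2 (by linarith)⟩

lemma bakerFactor_le_iff_of_lt_half {x t : ℝ} (hx : x < 1/2) (ht : t ≤ 1) :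
    bakerFactor x ≤ t ↔ x ≤ t - t^2/2 := by
  rw [bakerFactor, if_pos hx, sub_le_comm, Real.le_sqrt (by linarith) (by linarith)]
  constructor <;> intro h <;> linarith

lemma bakerFactor_le_iff_of_half_le {x t : ℝ} (hx : 1/2 ≤ x) (ht : 0 ≤ t) :
    bakerFactor x ≤ t ↔ x ≤ (1 + t^2)/2 := by
  rw [bakerFactor, if_neg hx.not_gt, Real.sqrt_le_left ht]
  constructor <;> intro h <;> linarith

lemma bakerFactor_preimage_Iic_inter_Icc {t : ℝ} (ht : t ∈ Ico (0:ℝ) 1) :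
    bakerFactor ⁻¹' Iic t ∩ Icc 0 1 = Icc 0 (t - t^2/2) ∪ Icc (1/2) ((1 + t^2)/2) := by
  obtain ⟨ht0, ht1⟩ := ht
  ext x
  simp only [mem_inter_iff, mem_preimage, mem_Iic, mem_Icc, mem_union]
  rcases lt_or_ge x (1/2) with hx | hx
  · rw [bakerFactor_le_iff_of_lt_half hx ht1.le]
    constructor
    · rintro ⟨h, hx0, -⟩
      exact Or.inl ⟨hx0, h⟩
    · rintro (⟨hx0, h⟩ | ⟨h, -⟩)
      · exact ⟨h, hx0, by linarith⟩
      · linarith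
  · rw [bakerFactor_le_iff_of_half_le hx ht0]
    constructor
    · rintro ⟨h, -⟩
      exact Or.inr ⟨hx, h⟩
    · rintro (⟨-, h⟩ | ⟨-, h⟩)
      · nlinarith
      · exact ⟨h, by linarith, by nlinarith⟩

lemma volume_bakerFactor_preimage_Iic_inter_Icc {t : ℝ} (ht : t ∈ Ico (0:ℝ) 1) :
    volume (bakerFactor ⁻¹' Iic t ∩ Icc 0 1) = ENNReal.ofReal t := by
  obtain ⟨ht0, ht1⟩ := ht
  have hdisj : Disjoint (Icc (0:ℝ) (t - t^2/2)) (Icc (1/2) ((1 + t^2)/2)) :=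
    disjoint_left.2 fun x hx hx' => by nlinarith [hx.2, hx'.1]
  rw [bakerFactor_preimage_Iic_inter_Icc ⟨ht0, ht1⟩, measure_union hdisj measurableSet_Icc,
    Real.volume_Icc, Real.volume_Icc, ← ENNReal.ofReal_add (by nlinarith) (by nlinarith)]
  ring_nf

theorem stmt_1 :
    MeasurePreserving bakerFactor
      (volume.restrict (Set.Icc (0:ℝ) 1))
      (volume.restrict (Set.Icc (0:ℝ) 1)) :=
  measurePreserving_volume_restrict_Icc bakerFactor_measurable bakerFactor_mapsTo
    fun t ht => by rw [sub_zero, volume_bakerFactor_preimage_Iic_inter_Icc ht]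
end

section
/- Let (xₙ) be a decreasing sequence of positive reals with x₀ ≤ δ₀, satisfying C₀⁻¹ xₙ^{1+α} ≤ xₙ - x_{n+1} ≤ C₀ xₙ^{1+α} for all n and some constants C₀ ≥ 1, α > 0, δ₀ > 0. Then there exist constants c, C > 0 such that c·n^{-1/α} ≤ xₙ ≤ C·n^{-1/α} for all n ≥ 1. -/
/-! Put `yₙ = xₙ ^ (-α)`. By convexity of `t ↦ t ^ (-α)` the increment `yₙ₊₁ - yₙ` lies between
`α (xₙ - xₙ₊₁) / xₙ ^ (1 + α) ≥ α / C₀` and `α (xₙ - xₙ₊₁) / xₙ₊₁ ^ (1 + α)`. The latter is at most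
`α C₀ 2 ^ (1 + α)` once `xₙ ≤ 2 xₙ₊₁`, which holds for large `n` because the lower bound forces
`yₙ → ∞`. So `yₙ` grows linearly in `n`, that is, `xₙ ≍ n ^ (-1 / α)`. -/

open Filter

theorem Real.one_sub_mul_le_rpow_neg {α t : ℝ} (hα : 0 ≤ α) (ht : 0 < t) :
    1 - α * (t - 1) ≤ t ^ (-α) := by
  -- `t ^ (-α) = exp (-α log t) ≥ 1 - α log t` and `log t ≤ t - 1`
  have hlog := Real.log_le_sub_one_of_pos ht
  have hexp := Real.add_one_le_exp (Real.log t * (-α))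
  rw [Real.rpow_def_of_pos ht]
  nlinarith

theorem Real.mul_sub_div_rpow_le_rpow_neg_sub {α a b : ℝ} (hα : 0 ≤ α) (ha : 0 < a)
    (hb : 0 < b) : α * (a - b) / a ^ (1 + α) ≤ b ^ (-α) - a ^ (-α) := by
  have h := Real.one_sub_mul_le_rpow_neg hα (div_pos hb ha)
  rw [Real.div_rpow hb.le ha.le, le_div_iff₀ (by positivity)] at h
  have hlhs : α * (a - b) / a ^ (1 + α) = -(α * (b / a - 1)) * a ^ (-α) := by
    rw [Real.rpow_add ha, Real.rpow_one, Real.rpow_neg ha.le]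
    field_simp
    ring
  linarith

theorem add_mul_le_rpow_neg_of_mul_rpow_le_sub {α c a b : ℝ} (hα : 0 ≤ α) (ha : 0 < a)
    (hb : 0 < b) (hgap : c * a ^ (1 + α) ≤ a - b) : a ^ (-α) + α * c ≤ b ^ (-α) := by
  have hpow : 0 < a ^ (1 + α) := by positivity
  have : α * c ≤ α * (a - b) / a ^ (1 + α) := by
    rw [le_div_iff₀ hpow, mul_assoc]
    exact mul_le_mul_of_nonneg_left hgap hα
  linarith [Real.mul_sub_div_rpow_le_rpow_neg_sub hα ha hb]

theorem rpow_neg_le_add_of_sub_le_mul_rpow {α C a b : ℝ} (hα : 0 ≤ α) (hC : 0 ≤ C) (ha : 0 < a)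
    (hb : 0 < b) (hgap : a - b ≤ C * a ^ (1 + α)) (hsmall : 2 * C ≤ a ^ (-α)) :
    b ^ (-α) ≤ a ^ (-α) + α * C * 2 ^ (1 + α) := by
  have hab : a ≤ 2 * b := by
    have hsplit : a ^ (1 + α) = a * a ^ α := by rw [Real.rpow_add ha, Real.rpow_one]
    have hinv : a ^ (-α) * a ^ α = 1 := by rw [← Real.rpow_add ha, neg_add_cancel, Real.rpow_zero]
    have : 0 < a ^ α := by positivity
    nlinarith [mul_le_mul_of_nonneg_right hsmall (mul_pos ha this).le]
  have hratio : (a / b) ^ (1 + α) ≤ 2 ^ (1 + α) :=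
    Real.rpow_le_rpow (by positivity) ((div_le_iff₀ hb).2 hab) (by linarith)
  have : α * (a - b) / b ^ (1 + α) ≤ α * C * 2 ^ (1 + α) := calc
    α * (a - b) / b ^ (1 + α) ≤ α * (C * a ^ (1 + α)) / b ^ (1 + α) := by gcongr
    _ = α * C * (a / b) ^ (1 + α) := by rw [Real.div_rpow ha.le hb.le]; ring
    _ ≤ α * C * 2 ^ (1 + α) := by gcongr
  have hflip : α * (b - a) / b ^ (1 + α) = -(α * (a - b) / b ^ (1 + α)) := by ring
  linarith [Real.mul_sub_div_rpow_le_rpow_neg_sub hα hb ha]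

theorem add_mul_le_of_forall_add_le_succ {y : ℕ → ℝ} {K : ℝ} (h : ∀ n, y n + K ≤ y (n + 1))
    (n : ℕ) : y 0 + n * K ≤ y n := by
  induction n with
  | zero => simp
  | succ n ih => push_cast; linarith [h n]

theorem exists_pos_le_mul_of_eventually_succ_le_add {y : ℕ → ℝ} {B : ℝ} (hy : Monotone y)
    (hy0 : 0 < y 0) (h : ∀ᶠ n in atTop, y (n + 1) ≤ y n + B) :
    ∃ A > 0, ∀ n : ℕ, 1 ≤ n → y n ≤ A * n := by
  obtain ⟨N, hN⟩ := eventually_atTop.1 h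
  have hB : 0 ≤ B := by linarith [hN N le_rfl, hy N.le_succ]
  have hyN : 0 < y N := hy0.trans_le (hy N.zero_le)
  have hlin : ∀ m : ℕ, y (N + m) ≤ y N + m * B := by
    intro m
    induction m with
    | zero => simp
    | succ m ih => rw [← add_assoc]; push_cast; linarith [hN (N + m) (N.le_add_right m)]
  refine ⟨y N + B, by positivity, fun n hn => ?_⟩
  have hn1 : (1 : ℝ) ≤ n := by exact_mod_cast hn
  rcases le_or_gt N n with hNn | hnN
  · obtain ⟨m, rfl⟩ := Nat.exists_eq_add_of_le hNn
    have hm : (0 : ℝ) ≤ N := N.cast_nonneg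
    push_cast at hn1 ⊢
    nlinarith [hlin m]
  · nlinarith [hy hnN.le]

theorem stmt_7_general (α C₀ : ℝ) (hα : 0 < α) (hC₀ : 1 ≤ C₀)
    (x : ℕ → ℝ) (hpos : ∀ n, 0 < x n) (hdec : StrictAnti x)
    (hgap : ∀ n, C₀⁻¹ * (x n)^(1+α) ≤ x n - x (n+1) ∧
                 x n - x (n+1) ≤ C₀ * (x n)^(1+α)) :
    ∃ c > (0:ℝ), ∃ C > (0:ℝ), ∀ n : ℕ, 1 ≤ n →
      c * (n:ℝ)^(-(1/α)) ≤ x n ∧ x n ≤ C * (n:ℝ)^(-(1/α)) := by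
  set y : ℕ → ℝ := fun n => x n ^ (-α)
  have hy : ∀ n, 0 < y n := fun n => Real.rpow_pos_of_pos (hpos n) _
  have hK : 0 < α * C₀⁻¹ := by positivity
  have hy_ge : ∀ n : ℕ, α * C₀⁻¹ * n ≤ y n := fun n => by
    have := add_mul_le_of_forall_add_le_succ (fun n =>
      add_mul_le_rpow_neg_of_mul_rpow_le_sub hα.le (hpos n) (hpos (n + 1)) (hgap n).1) n
    linarith [hy 0]
  have hy_tendsto : Tendsto y atTop atTop :=
    tendsto_atTop_mono hy_ge (tendsto_natCast_atTop_atTop.const_mul_atTop hK)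
  have hy_step : ∀ᶠ n in atTop, y (n + 1) ≤ y n + α * C₀ * 2 ^ (1 + α) := by
    filter_upwards [hy_tendsto.eventually_ge_atTop (2 * C₀)] with n hn
    exact rpow_neg_le_add_of_sub_le_mul_rpow hα.le (by linarith) (hpos n) (hpos (n + 1))
      (hgap n).2 hn
  have hy_mono : Monotone y := fun m n hmn =>
    Real.rpow_le_rpow_of_nonpos (hpos n) (hdec.antitone hmn) (by linarith)
  obtain ⟨A, hA, hy_le⟩ := exists_pos_le_mul_of_eventually_succ_le_add hy_mono (hy 0) hy_step
  have hexp : -(1 / α) = (-α)⁻¹ := by rw [one_div, inv_neg]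
  have hα' : -α < 0 := by linarith
  refine ⟨A ^ (-(1 / α)), by positivity, (α * C₀⁻¹) ^ (-(1 / α)), by positivity, fun n hn => ?_⟩
  have hn' : (0 : ℝ) < n := by exact_mod_cast hn
  rw [← Real.mul_rpow hA.le hn'.le, ← Real.mul_rpow hK.le hn'.le, hexp]
  exact ⟨(Real.rpow_inv_le_iff_of_neg (by positivity) (hpos n) hα').2 (hy_le n hn),
    (Real.le_rpow_inv_iff_of_neg (hpos n) (by positivity) hα').2 (hy_ge n)⟩

theorem stmt_7 (α C₀ δ₀ : ℝ) (hα : 0 < α) (hC₀ : 1 ≤ C₀) (hδ₀ : 0 < δ₀)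
    (x : ℕ → ℝ) (hpos : ∀ n, 0 < x n) (hdec : StrictAnti x)
    (hx0 : x 0 ≤ δ₀)
    (hgap : ∀ n, C₀⁻¹ * (x n)^(1+α) ≤ x n - x (n+1) ∧
                 x n - x (n+1) ≤ C₀ * (x n)^(1+α)) :
    ∃ c > (0:ℝ), ∃ C > (0:ℝ), ∀ n : ℕ, 1 ≤ n →
      c * (n:ℝ)^(-(1/α)) ≤ x n ∧ x n ≤ C * (n:ℝ)^(-(1/α)) :=
  stmt_7_general α C₀ hα hC₀ x hpos hdec hgap
end

section
/- Let h ∈ L¹[0,1] be a.e. equal to a decreasing anti-symmetric function (h(1-x) = -h(x)). Then ∫₀¹ (1/2 - x)·h(x) dx ≥ (1/16)·∫₀¹ |h(x)| dx. -/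
/-!
Since `h` is decreasing and `h (1/2) = 0`, the weight `1/2 - x` and `h x` have the same sign, so
`(1/2 - x) h x ≥ 0` on `[0,1]` and the integral only decreases when restricted to `[0,1/4]`, where
`1/2 - x ≥ 1/4`. Monotonicity gives `∫₀^{1/4} h ≥ ½ ∫₀^{1/2} h`, and anti-symmetry gives
`∫₀¹ |h| = 2 ∫₀^{1/2} h`.
-/

open MeasureTheory Set intervalIntegral

theorem AntitoneOn.integral_le_two_mul_integral_left_half {g : ℝ → ℝ} {a d : ℝ} (hd : 0 ≤ d)
    (hg : AntitoneOn g (Icc a (a + 2 * d))) :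
    ∫ x in a..a + 2 * d, g x ≤ 2 * ∫ x in a..a + d, g x := by
  have hint : ∀ u v, a ≤ u → u ≤ v → v ≤ a + 2 * d → IntervalIntegrable g volume u v :=
    fun u v hau huv hv => AntitoneOn.intervalIntegrable
      (hg.mono (by rw [uIcc_of_le huv]; exact Icc_subset_Icc hau hv))
  have hshift : ∫ x in a + d..a + 2 * d, g x ≤ ∫ x in a..a + d, g x := by
    have hcomp : ∫ x in a..a + d, g (x + d) = ∫ x in a + d..a + 2 * d, g x := by
      rw [integral_comp_add_right]; ring_nf
    rw [← hcomp]
    refine integral_mono_on (by linarith) ?_ (hint a (a + d) le_rfl (by linarith) (by linarith)) ?_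
    · refine AntitoneOn.intervalIntegrable fun x hx y hy hxy => hg ?_ ?_ (by linarith)
      all_goals rw [uIcc_of_le (by linarith)] at hx hy
      · exact ⟨by linarith [hx.1], by linarith [hx.2]⟩
      · exact ⟨by linarith [hy.1], by linarith [hy.2]⟩
    · intro x hx
      exact hg ⟨hx.1, by linarith [hx.2]⟩ ⟨by linarith [hx.1], by linarith [hx.2]⟩
        (by linarith)
  rw [← integral_add_adjacent_intervals (hint a (a + d) le_rfl (by linarith) (by linarith))
    (hint (a + d) (a + 2 * d) (by linarith) (by linarith) le_rfl)]
  linarith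

theorem integral_eq_two_mul_integral_left_half_of_symm {f : ℝ → ℝ} {a b : ℝ} (hab : a ≤ b)
    (hf : IntervalIntegrable f volume a b) (hsymm : ∀ x ∈ Icc a b, f (a + b - x) = f x) :
    ∫ x in a..b, f x = 2 * ∫ x in a..(a + b) / 2, f x := by
  have hreflect : ∫ x in a..(a + b) / 2, f x = ∫ x in (a + b) / 2..b, f x := by
    calc ∫ x in a..(a + b) / 2, f x = ∫ x in a..(a + b) / 2, f (a + b - x) :=
          integral_congr fun x hx => by
            rw [uIcc_of_le (by linarith)] at hx
            exact (hsymm x ⟨hx.1, by linarith [hx.2]⟩).symm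
      _ = ∫ x in (a + b) / 2..b, f x := by rw [integral_comp_sub_left]; ring_nf
  have hmid : (a + b) / 2 ∈ uIcc a b := by rw [uIcc_of_le hab]; constructor <;> linarith
  rw [← integral_add_adjacent_intervals (hf.mono_set (uIcc_subset_uIcc_left hmid))
    (hf.mono_set (uIcc_subset_uIcc_right hmid))]
  linarith

theorem apply_half_eq_zero_of_antisymm {h : ℝ → ℝ}
    (hanti : ∀ x ∈ Icc (0 : ℝ) 1, h (1 - x) = -h x) : h (1 / 2) = 0 := by
  have := hanti (1 / 2) (by norm_num)
  norm_num at this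
  linarith

section AntisymmetricAntitone

variable {h : ℝ → ℝ} (hdec : AntitoneOn h (Icc 0 1)) (hanti : ∀ x ∈ Icc (0 : ℝ) 1, h (1 - x) = -h x)
include hdec hanti

theorem AntitoneOn.nonneg_of_antisymm {x : ℝ} (hx : x ∈ Icc (0 : ℝ) (1 / 2)) : 0 ≤ h x :=
  apply_half_eq_zero_of_antisymm hanti ▸
    hdec ⟨hx.1, by linarith [hx.2]⟩ (by norm_num) hx.2

theorem AntitoneOn.mul_nonneg_of_antisymm {x : ℝ} (hx : x ∈ Icc (0 : ℝ) 1) :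
    0 ≤ (1 / 2 - x) * h x := by
  rcases le_total x (1 / 2) with hle | hge
  · exact mul_nonneg (by linarith) (hdec.nonneg_of_antisymm hanti ⟨hx.1, hle⟩)
  · refine mul_nonneg_of_nonpos_of_nonpos (by linarith) ?_
    exact apply_half_eq_zero_of_antisymm hanti ▸ hdec (by norm_num) hx hge

theorem AntitoneOn.integral_abs_eq_two_mul_integral_of_antisymm :
    ∫ x in 0..1, |h x| = 2 * ∫ x in 0..1 / 2, h x := by
  have hint : IntervalIntegrable h volume 0 1 :=
    AntitoneOn.intervalIntegrable (by rwa [uIcc_of_le zero_le_one])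
  rw [integral_eq_two_mul_integral_left_half_of_symm zero_le_one hint.abs
    fun x hx => by rw [zero_add, hanti x hx, abs_neg], zero_add]
  congr 1
  refine integral_congr fun x hx => abs_of_nonneg <| hdec.nonneg_of_antisymm hanti ?_
  rwa [uIcc_of_le (by norm_num)] at hx

theorem AntitoneOn.integral_le_four_mul_integral_weighted_of_antisymm :
    ∫ x in 0..1 / 4, h x ≤ 4 * ∫ x in 0..1 / 4, (1 / 2 - x) * h x := by
  have hint : IntervalIntegrable h volume 0 (1 / 4) :=
    AntitoneOn.intervalIntegrable
      (hdec.mono (by rw [uIcc_of_le (by norm_num)]; exact Icc_subset_Icc le_rfl (by norm_num)))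
  rw [← intervalIntegral.integral_const_mul]
  refine integral_mono_on (by norm_num) hint ((hint.continuousOn_mul (by fun_prop)).const_mul _)
    fun x hx => ?_
  have := hdec.nonneg_of_antisymm hanti ⟨hx.1, by linarith [hx.2]⟩
  nlinarith [hx.2]

end AntisymmetricAntitone

theorem stmt_16_general (h : ℝ → ℝ)
    (hdec : AntitoneOn h (Set.Icc 0 1))
    (hanti : ∀ x ∈ Set.Icc (0:ℝ) 1, h (1 - x) = -h x) :
    (1/16) * ∫ x in Set.Icc (0:ℝ) 1, |h x| ≤
      ∫ x in Set.Icc (0:ℝ) 1, (1/2 - x) * h x := by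
  have hint : IntervalIntegrable h volume 0 1 :=
    AntitoneOn.intervalIntegrable (by rwa [uIcc_of_le zero_le_one])
  rw [integral_Icc_eq_integral_Ioc, integral_Icc_eq_integral_Ioc, ← integral_of_le zero_le_one,
    ← integral_of_le zero_le_one]
  calc (1 / 16) * ∫ x in 0..1, |h x| = (1 / 8) * ∫ x in 0..1 / 2, h x := by
        rw [hdec.integral_abs_eq_two_mul_integral_of_antisymm hanti]; ring
    _ ≤ (1 / 4) * ∫ x in 0..1 / 4, h x := by
        have := (hdec.mono (Icc_subset_Icc le_rfl (by norm_num))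
          ).integral_le_two_mul_integral_left_half (a := 0) (d := 1 / 4) (by norm_num)
        norm_num only [zero_add, mul_one_div] at this
        linarith
    _ ≤ ∫ x in 0..1 / 4, (1 / 2 - x) * h x := by
        linarith [hdec.integral_le_four_mul_integral_weighted_of_antisymm hanti]
    _ ≤ ∫ x in 0..1, (1 / 2 - x) * h x :=
        integral_mono_interval le_rfl (by norm_num) (by norm_num)
          ((ae_restrict_mem measurableSet_Ioc).mono fun x hx =>
            hdec.mul_nonneg_of_antisymm hanti (Ioc_subset_Icc_self hx))
          (hint.continuousOn_mul (by fun_prop))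

theorem stmt_16 (h : ℝ → ℝ)
    (hint : IntegrableOn h (Set.Icc 0 1) volume)
    (hdec : AntitoneOn h (Set.Icc 0 1))
    (hanti : ∀ x ∈ Set.Icc (0:ℝ) 1, h (1 - x) = -h x) :
    (1/16) * ∫ x in Set.Icc (0:ℝ) 1, |h x| ≤
      ∫ x in Set.Icc (0:ℝ) 1, (1/2 - x) * h x :=
  stmt_16_general h hdec hanti
end
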